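/- arXiv:1001.0028 — 4 statements merged into one kernel-verified Lean document; each statement's English description precedes it below -/
import Mathlib

section
/- Let G be a group, c ∈ G, and m ≥ 1. Let φ be the map on tuples (w₀, w₁, …, w_m) ∈ G^{m+1} with w₀w₁⋯w_m = c given by φ(w₀; w₁, …, w_m) = ((c w_m c⁻¹) w₀ (c w_m c⁻¹)⁻¹; c w_m c⁻¹, w₁, …, w_{m-1}). Then φ^m sends (w₀; w₁, …, w_m) to (c w₀ c⁻¹; c w₁ c⁻¹, …, c w_m c⁻¹), i.e., φ^m acts as simultaneous conjugation by c. -/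
/-! After `k ≤ m` steps the last `k` entries `w_{m-k+1}, …, w_m` have been moved, conjugated by `c`,
to the front of the tail, and `w₀` has been conjugated by the product `c (w_{m-k+1} ⋯ w_m) c⁻¹` of
the entries moved so far. At `k = m` the tail is conjugated by `c` throughout, and the relation
`w₀ (w₁ ⋯ w_m) = c` turns the conjugator of `w₀` into `c w₀⁻¹`, which acts on `w₀` as `c` does. -/

def phi {G : Type*} [Group G] (c : G) (m : ℕ) (w : Fin (m + 1) → G) :
    Fin (m + 1) → G := fun i =>
  if i = 0 then (c * w (Fin.last m) * c⁻¹) * w 0 * (c * w (Fin.last m) * c⁻¹)⁻¹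
  else if i = 1 then c * w (Fin.last m) * c⁻¹
  else w (i - 1)

theorem List.prod_drop_ofFn_eq_mul {M : Type*} [Monoid M] {n : ℕ} (f : Fin n → M) {j : ℕ}
    (hj : j < n) :
    ((List.ofFn f).drop j).prod = f ⟨j, hj⟩ * ((List.ofFn f).drop (j + 1)).prod := by
  rw [List.drop_eq_getElem_cons (by simpa), List.prod_cons, List.getElem_ofFn]

section

variable {G : Type*} [Group G] (c : G) {m : ℕ} (w : Fin (m + 1) → G)

theorem phi_apply_zero :
    phi c m w 0 = (c * w (Fin.last m) * c⁻¹) * w 0 * (c * w (Fin.last m) * c⁻¹)⁻¹ :=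
  if_pos rfl

theorem phi_apply_of_val_eq_one {i : Fin (m + 1)} (hi : i.val = 1) :
    phi c m w i = c * w (Fin.last m) * c⁻¹ := by
  have hi0 : i ≠ 0 := fun h => by simp [h] at hi
  have hi1 : i = 1 := Fin.ext (by rw [hi, Fin.val_one', Nat.mod_eq_of_lt (by omega)])
  simp only [phi, if_neg hi0, if_pos hi1]

theorem phi_apply_of_one_lt_val {i : Fin (m + 1)} (hi : 1 < i.val) :
    phi c m w i = w ⟨i.val - 1, by omega⟩ := by
  have hi0 : i ≠ 0 := fun h => by simp [h] at hi
  have hi1 : i ≠ 1 := fun h => by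
    rw [h, Fin.val_one', Nat.mod_eq_of_lt (by omega)] at hi
    exact lt_irrefl 1 hi
  simp only [phi, if_neg hi0, if_neg hi1]
  exact congrArg w (Fin.ext (by rw [Fin.coe_sub_one, if_neg hi0]))

theorem phi_iterate_apply {k : ℕ} (hk : k ≤ m) (i : Fin (m + 1)) :
    (phi c m)^[k] w i =
      if i.val = 0 then MulAut.conj (c * ((List.ofFn w).drop (m + 1 - k)).prod * c⁻¹) (w 0)
      else if h : i.val ≤ k then c * w ⟨m - k + i.val, by omega⟩ * c⁻¹
      else w ⟨i.val - k, by omega⟩ := by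
  induction k generalizing i with
  | zero =>
    have hdrop : (List.ofFn w).drop (m + 1 - 0) = [] := List.drop_of_length_le (by simp)
    simp only [Function.iterate_zero, id, hdrop, List.prod_nil, mul_one, mul_inv_cancel, map_one]
    split_ifs with h0 h
    · exact congrArg w (Fin.ext h0)
    · omega
    · exact congrArg w (Fin.ext (by simp))
  | succ k ih =>
    have hlast : (phi c m)^[k] w (Fin.last m) = w ⟨m - k, by omega⟩ := by
      rw [ih (by omega)]
      simp only [Fin.val_last, if_neg (show m ≠ 0 by omega), dif_neg (show ¬m ≤ k by omega)]
    rw [Function.iterate_succ_apply']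
    rcases Nat.lt_trichotomy i.val 1 with hi0 | hi1 | hi2
    · obtain rfl : i = 0 := Fin.ext (by rw [Fin.val_zero]; omega)
      rw [phi_apply_zero, hlast, ih (by omega), show m + 1 - (k + 1) = m - k by omega,
        List.prod_drop_ofFn_eq_mul w (show m - k < m + 1 by omega),
        show m - k + 1 = m + 1 - k by omega]
      simp only [Fin.val_zero, if_true, MulAut.conj_apply]
      group
    · rw [phi_apply_of_val_eq_one c _ hi1, hlast]
      simp only [hi1, one_ne_zero, if_false, dif_pos (show 1 ≤ k + 1 by omega)]
      congr 4; omega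
    · rw [phi_apply_of_one_lt_val c _ hi2, ih (by omega)]
      simp only [show i.val - 1 ≠ 0 by omega, show i.val ≠ 0 by omega, if_false]
      by_cases hik : i.val ≤ k + 1
      · rw [dif_pos (by omega), dif_pos hik]
        congr 4; omega
      · rw [dif_neg (by omega), dif_neg hik]
        congr 2; omega

end

theorem stmt_4_general {G : Type*} [Group G] (c : G) (m : ℕ)
    (w : Fin (m + 1) → G) (hw : (List.ofFn w).prod = c) :
    (phi c m)^[m] w = fun i => c * w i * c⁻¹ := by
  have hconj : c * ((List.ofFn w).drop 1).prod * c⁻¹ = c * (w 0)⁻¹ := by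
    rw [← hw, List.ofFn_succ, List.drop_one, List.tail_cons, List.prod_cons]
    group
  funext i
  rw [phi_iterate_apply c w le_rfl, Nat.add_sub_cancel_left, hconj]
  split_ifs with h0 h
  · obtain rfl : i = 0 := Fin.ext h0
    rw [MulAut.conj_apply]
    group
  · congr 4; omega
  · exact absurd (Nat.le_of_lt_succ i.isLt) h

theorem stmt_4 {G : Type*} [Group G] (c : G) (m : ℕ) (hm : 1 ≤ m)
    (w : Fin (m + 1) → G) (hw : (List.ofFn w).prod = c) :
    (phi c m)^[m] w = fun i => c * w i * c⁻¹ :=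
  stmt_4_general c m w hw
end

section
/- For every odd positive integer m, 88·(m+1)/2 + 2515·C((m+1)/2, 2) + 8550·C((m+1)/2, 3) + 6750·C((m+1)/2, 4) = (m+1)(5m+3)(15m+7)(15m+1)/64, where C(n,k) denotes the binomial coefficient. -/
open Finset

theorem Nat.cast_choose_eq_prod_range_div {K : Type*} [Field K] [CharZero K] (n k : ℕ) :
    (n.choose k : K) = (∏ j ∈ range k, ((n : K) - j)) / k.factorial := by
  rw [Nat.cast_choose_eq_descPochhammer_div, descPochhammer_eval_eq_prod_range]

/-- The theorem in terms of `n = (m + 1) / 2`, i.e. with `m = 2n - 1` substituted on the right. -/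
theorem choose_combination_eq_product (n : ℕ) :
    (88 : ℚ) * n + 2515 * (n.choose 2 : ℕ) + 8550 * (n.choose 3 : ℕ) + 6750 * (n.choose 4 : ℕ)
      = 2 * n * (10 * n - 2) * (30 * n - 8) * (30 * n - 14) / 64 := by
  simp only [Nat.cast_choose_eq_prod_range_div, prod_range_succ, prod_range_zero, Nat.factorial]
  push_cast
  ring

theorem stmt_16_general (m : ℕ) (hodd : Odd m) :
    (88 : ℚ) * (((m + 1) / 2 : ℕ) : ℚ) + 2515 * ((((m + 1) / 2).choose 2 : ℕ) : ℚ)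
      + 8550 * ((((m + 1) / 2).choose 3 : ℕ) : ℚ)
      + 6750 * ((((m + 1) / 2).choose 4 : ℕ) : ℚ)
      = (m + 1) * (5 * m + 3) * (15 * m + 7) * (15 * m + 1) / 64 := by
  obtain ⟨k, rfl⟩ := hodd
  rw [show (2 * k + 1 + 1) / 2 = k + 1 by omega, choose_combination_eq_product]
  push_cast
  ring

theorem stmt_16 (m : ℕ) (hm : 0 < m) (hodd : Odd m) :
    (88 : ℚ) * (((m + 1) / 2 : ℕ) : ℚ) + 2515 * ((((m + 1) / 2).choose 2 : ℕ) : ℚ)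
      + 8550 * ((((m + 1) / 2).choose 3 : ℕ) : ℚ)
      + 6750 * ((((m + 1) / 2).choose 4 : ℕ) : ℚ)
      = (m + 1) * (5 * m + 3) * (15 * m + 7) * (15 * m + 1) / 64 :=
  stmt_16_general m hodd
end

section
/- Let m be a positive integer divisible by 3 and let ζ ∈ ℂ be a primitive 6th root of unity. Then the limit as q → ζ of the product ((1-q^{14m+14})(1-q^{14m+6})(1-q^{14m+4})) / ((1-q^{14})(1-q^{6})(1-q^{4})) equals (7m+3)/3. -/
/-!
Splitting the quotient as `∏ (1 - q^(14m+e)) / (1 - q^e)` over `e = 14, 6, 4`: since `6 ∣ 14m`,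
the factors for `e = 14` and `e = 4` are continuous at `ζ` with value `1`, because
`ζ^14 = ζ^2 ≠ 1` and `ζ^4 ≠ 1`. The factor for `e = 6` is the geometric sum
`∑_{i < 7m/3 + 1} q^(6i)`, which tends to `7m/3 + 1` since `ζ^6 = 1`.
-/

open Filter Topology

variable {𝕜 : Type*} [NormedField 𝕜]

lemma eventually_pow_ne_one_nhdsNE {d : ℕ} (hd : d ≠ 0) (ζ : 𝕜) :
    ∀ᶠ q in 𝓝[≠] ζ, q ^ d ≠ 1 := by
  classical
  have hfin : {q : 𝕜 | q ^ d = 1}.Finite :=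
    (Polynomial.nthRoots d (1 : 𝕜)).toFinset.finite_toSet.subset fun q hq => by
      simpa [Polynomial.mem_nthRoots (Nat.pos_of_ne_zero hd)] using hq
  exact (nhdsNE_le_cofinite ζ) hfin.eventually_cofinite_notMem

lemma tendsto_one_sub_pow_mul_div_one_sub_pow {d : ℕ} (hd : d ≠ 0) {ζ : 𝕜} (hζ : ζ ^ d = 1)
    (N : ℕ) :
    Tendsto (fun q : 𝕜 => (1 - q ^ (d * N)) / (1 - q ^ d)) (𝓝[≠] ζ) (𝓝 (N : 𝕜)) := by
  have hgeom : ∀ᶠ q in 𝓝[≠] ζ,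
      ∑ i ∈ Finset.range N, (q ^ d) ^ i = (1 - q ^ (d * N)) / (1 - q ^ d) := by
    filter_upwards [eventually_pow_ne_one_nhdsNE hd ζ] with q hq
    rw [pow_mul, ← neg_div_neg_eq, neg_sub, neg_sub, geom_sum_eq hq]
  have hcont : ContinuousAt (fun q : 𝕜 => ∑ i ∈ Finset.range N, (q ^ d) ^ i) ζ := by fun_prop
  refine (tendsto_nhdsWithin_of_tendsto_nhds hcont.tendsto).congr' hgeom |>.trans_eq ?_
  simp [hζ]

lemma tendsto_one_sub_pow_div_one_sub_pow_of_pow_eq {a b : ℕ} {ζ : 𝕜} (hab : ζ ^ a = ζ ^ b)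
    (hb : ζ ^ b ≠ 1) :
    Tendsto (fun q : 𝕜 => (1 - q ^ a) / (1 - q ^ b)) (𝓝 ζ) (𝓝 1) := by
  have hden : 1 - ζ ^ b ≠ 0 := sub_ne_zero.mpr hb.symm
  have hcont : ContinuousAt (fun q : 𝕜 => (1 - q ^ a) / (1 - q ^ b)) ζ :=
    (by fun_prop : ContinuousAt (fun q : 𝕜 => 1 - q ^ a) ζ).div (by fun_prop) hden
  simpa [hab, div_self hden] using hcont.tendsto

theorem stmt_17_general (m : ℕ) (h3 : 3 ∣ m) (ζ : ℂ)
    (hζ : IsPrimitiveRoot ζ 6) :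
    Tendsto (fun q : ℂ =>
        ((1 - q ^ (14 * m + 14)) * (1 - q ^ (14 * m + 6)) * (1 - q ^ (14 * m + 4))) /
          ((1 - q ^ 14) * (1 - q ^ 6) * (1 - q ^ 4)))
      (nhdsWithin ζ {ζ}ᶜ) (nhds ((7 * m + 3) / 3 : ℂ)) := by
  obtain ⟨k, rfl⟩ := h3
  have hmod : ∀ {a b : ℕ}, a % 6 = b % 6 → ζ ^ a = ζ ^ b := fun h => by
    rw [← pow_mod_orderOf, ← hζ.eq_orderOf, h, hζ.eq_orderOf, pow_mod_orderOf]
  have h14 : Tendsto (fun q : ℂ => (1 - q ^ (14 * (3 * k) + 14)) / (1 - q ^ 14)) (𝓝[≠] ζ) (𝓝 1) :=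
    tendsto_nhdsWithin_of_tendsto_nhds <| tendsto_one_sub_pow_div_one_sub_pow_of_pow_eq
      (hmod (by omega)) (by rw [Ne, hζ.pow_eq_one_iff_dvd]; decide)
  have h4 : Tendsto (fun q : ℂ => (1 - q ^ (14 * (3 * k) + 4)) / (1 - q ^ 4)) (𝓝[≠] ζ) (𝓝 1) :=
    tendsto_nhdsWithin_of_tendsto_nhds <| tendsto_one_sub_pow_div_one_sub_pow_of_pow_eq
      (hmod (by omega)) (by rw [Ne, hζ.pow_eq_one_iff_dvd]; decide)
  have h6 := tendsto_one_sub_pow_mul_div_one_sub_pow (by norm_num) hζ.pow_eq_one (7 * k + 1)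
  rw [show 6 * (7 * k + 1) = 14 * (3 * k) + 6 by ring] at h6
  convert (h14.mul h6).mul h4 using 2
  · rw [mul_div_mul_comm, mul_div_mul_comm]
  · push_cast
    ring

theorem stmt_17 (m : ℕ) (hm : 0 < m) (h3 : 3 ∣ m) (ζ : ℂ)
    (hζ : IsPrimitiveRoot ζ 6) :
    Tendsto (fun q : ℂ =>
        ((1 - q ^ (14 * m + 14)) * (1 - q ^ (14 * m + 6)) * (1 - q ^ (14 * m + 4))) /
          ((1 - q ^ 14) * (1 - q ^ 6) * (1 - q ^ 4)))
      (nhdsWithin ζ {ζ}ᶜ) (nhds ((7 * m + 3) / 3 : ℂ)) :=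
  stmt_17_general m h3 ζ hζ
end

section
/- Let m be a positive integer and let ζ ∈ ℂ be a primitive 10th root of unity. Then the limit as q → ζ of the product ∏_{d ∈ {30m+30, 30m+24, 30m+20, 30m+18, 30m+14, 30m+12, 30m+8, 30m+2}} (1-q^d) divided by ∏_{d ∈ {30, 24, 20, 18, 14, 12, 8, 2}} (1-q^d) equals (m+1)(3m+2)/2. -/
/-!
Split the quotient into the eight ratios `(1 - q ^ (30m + d)) / (1 - q ^ d)`; at a primitive
10th root of unity `ζ` the factor `1 - q ^ d` vanishes exactly when `10 ∣ d`. For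
`d ∈ {24, 18, 14, 12, 8, 2}` both terms are nonzero at `ζ` and, as `ζ ^ (30m) = 1`, the ratio tends
to `1`. For `d = 30, 20` we cancel `1 - q ^ 10` from `1 - q ^ (10k) = (1 - q ^ 10)(1 + q ^ 10 + ⋯)`,
leaving the ratios of geometric sums `(3m+3)/3` and `(3m+2)/2`.
-/

open Filter Finset Topology

theorem eventually_pow_ne_one_nhdsNE_s18 {K : Type*} [Field K] [TopologicalSpace K] [T1Space K]
    {n : ℕ} (hn : 0 < n) (z : K) : ∀ᶠ q in 𝓝[≠] z, q ^ n ≠ 1 := by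
  have hroots : {q : K | q ^ n = 1}.Finite :=
    (Polynomial.nthRoots n (1 : K)).finite_toSet.subset fun q hq =>
      (Polynomial.mem_nthRoots hn).mpr hq
  filter_upwards [nhdsNE_of_nhdsNE_sdiff_finite univ_mem hroots.to_subtype] with q hq
  exact hq.2

theorem tendsto_one_sub_pow_add_div_one_sub_pow {K : Type*} [NormedField K] {z : K} {a k : ℕ}
    (ha : z ^ a = 1) (hk : z ^ k ≠ 1) :
    Tendsto (fun q : K => (1 - q ^ (a + k)) / (1 - q ^ k)) (𝓝 z) (𝓝 1) := by
  have hk' : 1 - z ^ k ≠ 0 := sub_ne_zero.mpr hk.symm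
  have h : Tendsto (fun q : K => (1 - q ^ (a + k)) / (1 - q ^ k)) (𝓝 z)
      (𝓝 ((1 - z ^ (a + k)) / (1 - z ^ k))) :=
    ((continuous_const.sub (continuous_pow _)).tendsto z).div
      ((continuous_const.sub (continuous_pow _)).tendsto z) hk'
  rwa [pow_add, ha, one_mul, div_self hk'] at h

theorem tendsto_one_sub_pow_mul_div_one_sub_pow_mul {K : Type*} [NormedField K] [CharZero K]
    {z : K} {n : ℕ} (hz : z ^ n = 1) (hn : 0 < n) (a : ℕ) {b : ℕ} (hb : 0 < b) :
    Tendsto (fun q : K => (1 - q ^ (n * a)) / (1 - q ^ (n * b))) (𝓝[≠] z) (𝓝 (a / b)) := by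
  let geom (k : ℕ) (q : K) : K := ∑ i ∈ range k, (q ^ n) ^ i
  have hgeom_cont (k : ℕ) : Continuous (geom k) := by fun_prop
  have hgeom_z (k : ℕ) : geom k z = k := by simp [geom, hz]
  have hquot : Tendsto (fun q => geom a q / geom b q) (𝓝 z) (𝓝 (a / b)) := by
    rw [← hgeom_z a, ← hgeom_z b]
    exact ((hgeom_cont a).tendsto z).div ((hgeom_cont b).tendsto z)
      (by rw [hgeom_z]; exact_mod_cast hb.ne')
  refine (hquot.mono_left nhdsWithin_le_nhds).congr' ?_
  filter_upwards [eventually_pow_ne_one_nhdsNE_s18 hn z] with q hq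
  rw [pow_mul, pow_mul, ← mul_neg_geom_sum (q ^ n) a, ← mul_neg_geom_sum (q ^ n) b]
  exact (mul_div_mul_left _ _ (sub_ne_zero.mpr hq.symm)).symm

theorem stmt_18_general (m : ℕ) (ζ : ℂ) (hζ : IsPrimitiveRoot ζ 10) :
    Tendsto (fun q : ℂ =>
        ((1 - q ^ (30 * m + 30)) * (1 - q ^ (30 * m + 24)) * (1 - q ^ (30 * m + 20)) *
            (1 - q ^ (30 * m + 18)) * (1 - q ^ (30 * m + 14)) * (1 - q ^ (30 * m + 12)) *
            (1 - q ^ (30 * m + 8)) * (1 - q ^ (30 * m + 2))) /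
          ((1 - q ^ 30) * (1 - q ^ 24) * (1 - q ^ 20) * (1 - q ^ 18) *
            (1 - q ^ 14) * (1 - q ^ 12) * (1 - q ^ 8) * (1 - q ^ 2)))
      (nhdsWithin ζ {ζ}ᶜ) (nhds ((m + 1) * (3 * m + 2) / 2 : ℂ)) := by
  have hζ30m : ζ ^ (30 * m) = 1 := by
    rw [show 30 * m = 10 * (3 * m) by ring, pow_mul, hζ.pow_eq_one, one_pow]
  have hunit (k : ℕ) (hk : ¬ 10 ∣ k) :
      Tendsto (fun q : ℂ => (1 - q ^ (30 * m + k)) / (1 - q ^ k)) (𝓝[≠] ζ) (𝓝 1) :=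
    (tendsto_one_sub_pow_add_div_one_sub_pow hζ30m
      fun h => hk ((hζ.pow_eq_one_iff_dvd k).mp h)).mono_left nhdsWithin_le_nhds
  have h30 := tendsto_one_sub_pow_mul_div_one_sub_pow_mul hζ.pow_eq_one (by norm_num)
    (3 * m + 3) (b := 3) (by norm_num)
  have h20 := tendsto_one_sub_pow_mul_div_one_sub_pow_mul hζ.pow_eq_one (by norm_num)
    (3 * m + 2) (b := 2) (by norm_num)
  simp only [show 10 * (3 * m + 3) = 30 * m + 30 by ring, show 10 * (3 * m + 2) = 30 * m + 20 by ring,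
    Nat.reduceMul] at h30 h20
  simp only [mul_div_mul_comm]
  convert ((((((h30.mul (hunit 24 (by decide))).mul h20).mul (hunit 18 (by decide))).mul
    (hunit 14 (by decide))).mul (hunit 12 (by decide))).mul (hunit 8 (by decide))).mul
    (hunit 2 (by decide)) using 2
  push_cast
  ring

theorem stmt_18 (m : ℕ) (hm : 0 < m) (ζ : ℂ) (hζ : IsPrimitiveRoot ζ 10) :
    Tendsto (fun q : ℂ =>
        ((1 - q ^ (30 * m + 30)) * (1 - q ^ (30 * m + 24)) * (1 - q ^ (30 * m + 20)) *
            (1 - q ^ (30 * m + 18)) * (1 - q ^ (30 * m + 14)) * (1 - q ^ (30 * m + 12)) *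
            (1 - q ^ (30 * m + 8)) * (1 - q ^ (30 * m + 2))) /
          ((1 - q ^ 30) * (1 - q ^ 24) * (1 - q ^ 20) * (1 - q ^ 18) *
            (1 - q ^ 14) * (1 - q ^ 12) * (1 - q ^ 8) * (1 - q ^ 2)))
      (nhdsWithin ζ {ζ}ᶜ) (nhds ((m + 1) * (3 * m + 2) / 2 : ℂ)) :=
  stmt_18_general m ζ hζ
end
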